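/- In the setting of parameterized Gibbs direct observation, let Z_n(y) = ∫_Θ ( μ_θ(C_n(y)) / μ_{θ0}(C_n(y)) ) dΠ_0(θ). Then for μ_{θ0}-almost every y ∈ Ω, ∫_Θ ∫_Ω log( J_θ(x) / J_{θ0}(x) ) dμ_{θ0}(x) dΠ_0(θ) ≤ limsup_{n→∞} (1/n) log Z_n(y) ≤ 0. -/

import Mathlib

open MeasureTheory Filter Topology

attribute [local instance] Classical.propDecidable

noncomputable section

namespace PaperBGI

/-- The full one-sided shift space on `q` symbols. -/
abbrev FS (q : ℕ) := ℕ → Fin q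

/-- The left shift map. -/
def shift {q : ℕ} (x : FS q) : FS q := fun n => x (n + 1)

/-- The `n`-cylinder of `x`. -/
def cyl {q : ℕ} (x : FS q) (n : ℕ) : Set (FS q) := {z | ∀ j < n, z j = x j}

/-- `d(x,z) = (1/2)^{min{ n : x_n ≠ z_n }}` (and `0` if `x = z`). -/
def sdist {q : ℕ} (x z : FS q) : ℝ :=
  if h : ∃ n, x n ≠ z n then (1 / 2 : ℝ) ^ Nat.find h else 0

/-- Birkhoff sums along the shift. -/
def birk {q : ℕ} (f : FS q → ℝ) (n : ℕ) (x : FS q) : ℝ :=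
  ∑ j ∈ Finset.range n, f (shift^[j] x)

/-- Prepending a symbol to a sequence. -/
def cons {q : ℕ} (i : Fin q) (x : FS q) : FS q := fun n =>
  match n with
  | 0 => i
  | m + 1 => x m

/-- The subshift of finite type with transition matrix `M`. -/
def sftSet {q : ℕ} (M : Fin q → Fin q → Bool) : Set (FS q) :=
  {x | ∀ n, M (x n) (x (n + 1)) = true}

/-- Transitivity (irreducibility) of the transition matrix `M`. -/
def IsIrreducible {q : ℕ} (M : Fin q → Fin q → Bool) : Prop :=
  ∀ a c : Fin q, ∃ n, 0 < n ∧ ∃ p : ℕ → Fin q, p 0 = a ∧ p n = c ∧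
    ∀ i < n, M (p i) (p (i + 1)) = true

/-- Lipschitz continuity with respect to `sdist`. -/
def LipSh {q : ℕ} (f : FS q → ℝ) : Prop :=
  ∃ L : ℝ, 0 ≤ L ∧ ∀ x z, |f x - f z| ≤ L * sdist x z

/-- Lipschitz-norm distance between two functions. -/
def dLip {q : ℕ} (f g : FS q → ℝ) : ℝ :=
  (⨆ x : FS q, |f x - g x|) +
    ⨆ p : FS q × FS q,
      if p.1 = p.2 then 0 else |f p.1 - g p.1 - (f p.2 - g p.2)| / sdist p.1 p.2

/-- `J` is a (positive) normalized Jacobian on `Ω`. -/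
def Normalized {q : ℕ} (Ω : Set (FS q)) (J : FS q → ℝ) : Prop :=
  (∀ x, 0 < J x) ∧ ∀ x ∈ Ω, (∑ i : Fin q, if cons i x ∈ Ω then J (cons i x) else 0) = 1

/-- The Gibbs property (at zero pressure) w.r.t. the normalized potential `log J`. -/
def IsGibbs {q : ℕ} (Ω : Set (FS q)) (J : FS q → ℝ) (K : ℝ) (μ : Measure (FS q)) : Prop :=
  ∀ x ∈ Ω, ∀ n : ℕ, 1 ≤ n →
    K⁻¹ ≤ (μ (cyl x n)).toReal / Real.exp (birk (fun z => Real.log (J z)) n x) ∧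
      (μ (cyl x n)).toReal / Real.exp (birk (fun z => Real.log (J z)) n x) ≤ K

/-- The parameter box `Θ = [a₁,b₁] × ⋯ × [a_k,b_k]`. -/
def box {k : ℕ} (a b : Fin k → ℝ) : Set (Fin k → ℝ) :=
  Set.univ.pi fun i => Set.Icc (a i) (b i)

/-- Hypothesis A: `P₀` has a continuous strictly positive density on `Θ`. -/
def HypA {k : ℕ} (Θ : Set (Fin k → ℝ)) (P₀ : Measure (Fin k → ℝ)) : Prop :=
  IsProbabilityMeasure P₀ ∧
    ∃ ρ : (Fin k → ℝ) → ℝ, ContinuousOn ρ Θ ∧ (∀ θ ∈ Θ, 0 < ρ θ) ∧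
      P₀ = (volume.restrict Θ).withDensity fun θ => ENNReal.ofReal (ρ θ)

/-- The setting of parameterized Gibbs direct observation. -/
structure Setting (q k : ℕ) where
  /-- transition matrix of the subshift of finite type -/
  M : Fin q → Fin q → Bool
  irr : IsIrreducible M
  a : Fin k → ℝ
  b : Fin k → ℝ
  hab : ∀ i, a i ≤ b i
  /-- the parameterized family of Jacobians -/
  J : (Fin k → ℝ) → FS q → ℝ
  /-- the parameterized family of Gibbs measures -/
  μ : (Fin k → ℝ) → Measure (FS q)
  K : ℝ
  hK : 1 < K
  lip : ∀ θ ∈ box a b, LipSh fun x => Real.log (J θ x)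
  norm : ∀ θ ∈ box a b, Normalized (sftSet M) (J θ)
  contJ : ∀ θ' ∈ box a b, ∀ ε > (0 : ℝ), ∃ δ > (0 : ℝ), ∀ θ ∈ box a b, dist θ θ' < δ →
      dLip (fun x => Real.log (J θ x)) (fun x => Real.log (J θ' x)) < ε
  embJ : ∀ θ' ∈ box a b, ∀ ε > (0 : ℝ), ∃ δ > (0 : ℝ), ∀ θ ∈ box a b,
      dLip (fun x => Real.log (J θ x)) (fun x => Real.log (J θ' x)) < δ → dist θ θ' < ε
  injJ : Set.InjOn J (box a b)
  prob : ∀ θ ∈ box a b, IsProbabilityMeasure (μ θ)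
  erg : ∀ θ ∈ box a b, Ergodic (shift (q := q)) (μ θ)
  supp : ∀ θ ∈ box a b, μ θ (sftSet M) = 1
  gibbs : ∀ θ ∈ box a b, IsGibbs (sftSet M) (J θ) K (μ θ)
  uniq : ∀ θ ∈ box a b, ∀ ν : Measure (FS q), IsProbabilityMeasure ν → ν.map shift = ν →
      ν (sftSet M) = 1 → (∃ K' > (1 : ℝ), IsGibbs (sftSet M) (J θ) K' ν) → ν = μ θ
  measμ : ∀ (y : FS q) (n : ℕ), Measurable fun θ => μ θ (cyl y n)

/-- Relative entropy `h(μ_{θ₀} | μ_θ) = ∫ log (J_{θ₀}/J_θ) dμ_{θ₀}`. -/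
def relEnt {q k : ℕ} (S : Setting q k) (θ₀ θ : Fin k → ℝ) : ℝ :=
  ∫ x, Real.log (S.J θ₀ x / S.J θ x) ∂(S.μ θ₀)

/-- The `δ`-ball around `θ₀` inside `Θ`. -/
def pball {k : ℕ} (Θ : Set (Fin k → ℝ)) (θ₀ : Fin k → ℝ) (δ : ℝ) : Set (Fin k → ℝ) :=
  {θ ∈ Θ | dist θ θ₀ < δ}

end PaperBGI

/-!
The upper bound is a first-moment argument: summing over the finitely many `n`-cylinders,
`∫ Z_n dμ_{θ₀} ≤ 1`, so by Markov's inequality and Borel–Cantelli `Z_n(y) < e^{nε}`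
eventually, for every `ε > 0`, for `μ_{θ₀}`-a.e. `y`.

For the lower bound, the double integral is `≤ 0`: it averages `-h(μ_{θ₀} | μ_θ)`, and the
Gibbs property with shift invariance gives `n h(μ_{θ₀} | μ_θ) ≥ -2 log K` for all `n`.
On the other hand `(1/n) log Z_n(y) ≥ -ζ - o(1)`: for `θ` close to `θ₀` the log-Jacobians
are uniformly `ζ`-close, so by the Gibbs property `μ_θ(C_n(y)) / μ_{θ₀}(C_n(y)) ≥ K⁻² e^{-nζ}`,
and by Hypothesis A such `θ` carry positive prior mass.
-/

namespace PaperBGI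

section Shift

variable {q : ℕ}

lemma sdist_le_of_mem_cyl {x z : FS q} {n : ℕ} (hz : z ∈ cyl x n) :
    sdist z x ≤ (1 / 2 : ℝ) ^ n := by
  unfold sdist
  split_ifs with h
  · refine pow_le_pow_of_le_one (by norm_num) (by norm_num) ?_
    exact (Nat.le_find_iff h n).2 fun m hm => not_not_intro (hz m hm)
  · positivity

lemma isOpen_cyl (x : FS q) (n : ℕ) : IsOpen (cyl x n) :=
  PiNat.isOpen_cylinder _ x n

lemma LipSh.continuous {f : FS q → ℝ} (hf : LipSh f) : Continuous f := by
  obtain ⟨L, hL0, hL⟩ := hf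
  refine continuous_iff_continuousAt.2 fun x => Metric.tendsto_nhds.2 fun ε hε => ?_
  obtain ⟨n, hn⟩ := exists_pow_lt_of_lt_one (div_pos hε (by linarith : 0 < L + 1))
    (by norm_num : (1 / 2 : ℝ) < 1)
  filter_upwards [(isOpen_cyl x n).mem_nhds (PiNat.self_mem_cylinder x n)] with z hz
  calc dist (f z) (f x) ≤ L * sdist z x := hL z x
    _ ≤ L * (1 / 2) ^ n := by gcongr; exact sdist_le_of_mem_cyl hz
    _ ≤ (L + 1) * (1 / 2) ^ n := by gcongr; linarith
    _ < ε := by rwa [lt_div_iff₀' (by linarith)] at hn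

lemma abs_sub_le_dLip {f g : FS q → ℝ} (hf : Continuous f) (hg : Continuous g) (x : FS q) :
    |f x - g x| ≤ dLip f g := by
  have hbdd : BddAbove (Set.range fun z => |f z - g z|) :=
    (isCompact_range (hf.sub hg).abs).bddAbove
  have hslope : 0 ≤ ⨆ p : FS q × FS q,
      if p.1 = p.2 then 0 else |f p.1 - g p.1 - (f p.2 - g p.2)| / sdist p.1 p.2 := by
    refine Real.iSup_nonneg fun p => ?_
    split_ifs
    · exact le_rfl
    · exact div_nonneg (abs_nonneg _) (by unfold sdist; split_ifs <;> positivity)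
  unfold dLip
  linarith [le_ciSup hbdd x]

lemma measurableSet_sftSet (M : Fin q → Fin q → Bool) : MeasurableSet (sftSet M) := by
  unfold sftSet
  measurability

lemma birk_sub (f g : FS q → ℝ) (n : ℕ) (x : FS q) :
    birk (fun z => f z - g z) n x = birk f n x - birk g n x :=
  Finset.sum_sub_distrib _ _

lemma mul_le_birk {f : FS q → ℝ} {c : ℝ} (hf : ∀ x, c ≤ f x) (n : ℕ) (x : FS q) :
    n * c ≤ birk f n x := by
  simpa [birk] using Finset.card_nsmul_le_sum (Finset.range n) _ c fun j _ => hf (shift^[j] x)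

lemma integrable_birk {μ : Measure (FS q)} (hμ : MeasurePreserving shift μ μ) {f : FS q → ℝ}
    (hf : Integrable f μ) (n : ℕ) : Integrable (birk f n) μ :=
  integrable_finsetSum _ fun j _ => ((hμ.iterate j).integrable_comp hf.aestronglyMeasurable).2 hf

lemma integral_birk {μ : Measure (FS q)} (hμ : MeasurePreserving shift μ μ) {f : FS q → ℝ}
    (hf : Integrable f μ) (n : ℕ) : ∫ x, birk f n x ∂μ = n * ∫ x, f x ∂μ := by
  have hcomp : ∀ j, ∫ x, f (shift^[j] x) ∂μ = ∫ x, f x ∂μ := fun j => by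
    rw [← integral_map (hμ.iterate j).measurable.aemeasurable
      (by rw [(hμ.iterate j).map_eq]; exact hf.aestronglyMeasurable), (hμ.iterate j).map_eq]
  unfold birk
  rw [integral_finsetSum (f := fun j x => f (shift^[j] x)) _ fun j _ =>
    ((hμ.iterate j).integrable_comp hf.aestronglyMeasurable).2 hf]
  simp [hcomp]

end Shift

section Words

variable {q : ℕ}

def prefixWord (n : ℕ) (x : FS q) : Fin n → Fin q := fun j => x j

lemma measurable_prefixWord (n : ℕ) : Measurable (prefixWord (q := q) n) :=
  measurable_pi_lambda _ fun _ => measurable_pi_apply _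

lemma cyl_eq_preimage_prefixWord (x : FS q) (n : ℕ) :
    cyl x n = prefixWord n ⁻¹' {prefixWord n x} := by
  ext z
  simp only [cyl, prefixWord, Set.mem_ofPred_eq, Set.mem_preimage, Set.mem_singleton_iff,
    funext_iff, Fin.forall_iff]

end Words

section FiniteQuotient

variable {X α : Type*} [MeasurableSpace X] [Fintype α] [MeasurableSpace α]
  [MeasurableSingletonClass α] {π : X → α}

lemma integrable_comp_of_fintype (hπ : Measurable π) (μ : Measure X) [IsFiniteMeasure μ]
    (φ : α → ℝ) : Integrable (fun x => φ (π x)) μ :=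
  (integrable_map_measure (measurable_of_finite φ).aestronglyMeasurable hπ.aemeasurable).1
    Integrable.of_finite

lemma integral_comp_eq_sum (hπ : Measurable π) (μ : Measure X) [IsFiniteMeasure μ]
    (φ : α → ℝ) : ∫ x, φ (π x) ∂μ = ∑ w, (μ (π ⁻¹' {w})).toReal * φ w := by
  rw [← integral_map hπ.aemeasurable (measurable_of_finite φ).aestronglyMeasurable,
    integral_fintype Integrable.of_finite]
  simp [measureReal_def, Measure.map_apply hπ (measurableSet_singleton _)]

lemma sum_toReal_measure_fiber (hπ : Measurable π) (μ : Measure X) [IsProbabilityMeasure μ] :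
    ∑ w, (μ (π ⁻¹' {w})).toReal = 1 := by
  simpa using (integral_comp_eq_sum hπ μ fun _ => (1 : ℝ)).symm

lemma sum_mul_fiber_ratio_le_one (hπ : Measurable π) (μ ν : Measure X)
    [IsProbabilityMeasure ν] :
    ∑ w, (μ (π ⁻¹' {w})).toReal * ((ν (π ⁻¹' {w})).toReal / (μ (π ⁻¹' {w})).toReal) ≤ 1 := by
  refine le_of_le_of_eq (Finset.sum_le_sum fun w _ => ?_) (sum_toReal_measure_fiber hπ ν)
  rcases eq_or_ne (μ (π ⁻¹' {w})).toReal 0 with h | h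
  · simp [h]
  · rw [mul_div_cancel₀ _ h]

lemma integral_fiber_ratio_le_one (hπ : Measurable π) (μ ν : Measure X) [IsFiniteMeasure μ]
    [IsProbabilityMeasure ν] :
    ∫ x, (ν (π ⁻¹' {π x})).toReal / (μ (π ⁻¹' {π x})).toReal ∂μ ≤ 1 := by
  rw [integral_comp_eq_sum hπ μ fun w => (ν (π ⁻¹' {w})).toReal / (μ (π ⁻¹' {w})).toReal]
  exact sum_mul_fiber_ratio_le_one hπ μ ν

variable {T : Type*} [MeasurableSpace T] {P : Measure T} {μ : T → Measure X}

lemma integrable_toReal_measure_div [IsFiniteMeasure P]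
    (hμ : ∀ᵐ t ∂P, IsProbabilityMeasure (μ t)) {s : Set X} (hs : Measurable fun t => μ t s)
    (c : ℝ) : Integrable (fun t => (μ t s).toReal / c) P := by
  refine (Integrable.of_bound hs.ennreal_toReal.aestronglyMeasurable 1 ?_).div_const c
  filter_upwards [hμ] with t ht
  simpa using ENNReal.toReal_mono (by simp) (prob_le_one (μ := μ t) (s := s))

lemma integral_integral_fiber_ratio_le_one (hπ : Measurable π) (μ₀ : Measure X)
    [IsFiniteMeasure μ₀] [IsFiniteMeasure P] (hP : P Set.univ ≤ 1)
    (hμ : ∀ᵐ t ∂P, IsProbabilityMeasure (μ t))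
    (hmeas : ∀ x, Measurable fun t => μ t (π ⁻¹' {π x})) :
    ∫ x, ∫ t, (μ t (π ⁻¹' {π x})).toReal / (μ₀ (π ⁻¹' {π x})).toReal ∂P ∂μ₀ ≤ 1 := by
  have hmeas' : ∀ w, Measurable fun t => μ t (π ⁻¹' {w}) := fun w => by
    by_cases hw : w ∈ Set.range π
    · obtain ⟨x, rfl⟩ := hw
      exact hmeas x
    · simp [Set.preimage_singleton_eq_empty.2 hw]
  have hint : ∀ w, Integrable
      (fun t => (μ t (π ⁻¹' {w})).toReal / (μ₀ (π ⁻¹' {w})).toReal) P := fun w =>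
    integrable_toReal_measure_div hμ (hmeas' w) _
  calc ∫ x, ∫ t, (μ t (π ⁻¹' {π x})).toReal / (μ₀ (π ⁻¹' {π x})).toReal ∂P ∂μ₀
      = ∫ t, ∑ w, (μ₀ (π ⁻¹' {w})).toReal *
          ((μ t (π ⁻¹' {w})).toReal / (μ₀ (π ⁻¹' {w})).toReal) ∂P := by
        rw [integral_comp_eq_sum hπ μ₀ fun w =>
            ∫ t, (μ t (π ⁻¹' {w})).toReal / (μ₀ (π ⁻¹' {w})).toReal ∂P,
          integral_finsetSum _ fun w _ => (hint w).const_mul _]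
        simp only [integral_const_mul]
    _ ≤ ∫ _, (1 : ℝ) ∂P := by
        refine integral_mono_ae (integrable_finsetSum _ fun w _ => (hint w).const_mul _)
          (integrable_const _) ?_
        filter_upwards [hμ] with t ht
        exact sum_mul_fiber_ratio_le_one hπ μ₀ (μ t)
    _ ≤ 1 := by
        simpa [measureReal_def] using ENNReal.toReal_mono (by simp) hP

end FiniteQuotient

open Real

section Growth

variable {X : Type*} [MeasurableSpace X] {μ : Measure X} {Z : ℕ → X → ℝ}

lemma ae_eventually_lt_exp_mul [IsFiniteMeasure μ] (hZ : ∀ n x, 0 ≤ Z n x)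
    (hint : ∀ n, Integrable (Z n) μ) (hle : ∀ n, ∫ x, Z n x ∂μ ≤ 1) {ε : ℝ} (hε : 0 < ε) :
    ∀ᵐ x ∂μ, ∀ᶠ n : ℕ in atTop, Z n x < exp (n * ε) := by
  have hr : exp (-ε) < 1 := exp_lt_one_iff.2 (neg_lt_zero.2 hε)
  have hmarkov : ∀ n : ℕ, μ {x | exp (n * ε) ≤ Z n x} ≤ ENNReal.ofReal (exp (-ε) ^ n) := by
    intro n
    rw [← ofReal_measureReal]
    refine ENNReal.ofReal_le_ofReal ?_
    rw [← exp_nat_mul, mul_neg, exp_neg, inv_eq_one_div, le_div_iff₀' (exp_pos _)]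
    simpa using (mul_meas_ge_le_integral_of_nonneg (ae_of_all _ (hZ n)) (hint n) _).trans (hle n)
  have hsum : ∑' n : ℕ, μ {x | exp (n * ε) ≤ Z n x} ≠ ⊤ := by
    refine ne_top_of_le_ne_top ?_ (ENNReal.tsum_le_tsum hmarkov)
    rw [← ENNReal.ofReal_tsum_of_nonneg (fun n => by positivity)
      (summable_geometric_of_lt_one (exp_nonneg _) hr)]
    exact ENNReal.ofReal_ne_top
  simpa using ae_eventually_notMem hsum

lemma ae_eventually_inv_mul_log_le [IsFiniteMeasure μ] (hZ : ∀ n x, 0 ≤ Z n x)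
    (hint : ∀ n, Integrable (Z n) μ) (hle : ∀ n, ∫ x, Z n x ∂μ ≤ 1) :
    ∀ᵐ x ∂μ, ∀ ζ > (0 : ℝ), ∀ᶠ n : ℕ in atTop, (1 / n : ℝ) * log (Z n x) ≤ ζ := by
  have hall := ae_all_iff.2 fun m : ℕ =>
    ae_eventually_lt_exp_mul hZ hint hle (Nat.one_div_pos_of_nat (n := m))
  filter_upwards [hall] with x hx ζ hζ
  obtain ⟨m, hm⟩ := exists_nat_one_div_lt hζ
  filter_upwards [hx m, eventually_ge_atTop 1] with n hlt hn
  have hlog : log (Z n x) ≤ n * (1 / (m + 1)) := by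
    rcases (hZ n x).eq_or_lt with h | h
    · rw [← h, log_zero]
      positivity
    · exact (log_lt_iff_lt_exp h).2 hlt |>.le
  have hn' : (0 : ℝ) < n := by exact_mod_cast hn
  calc (1 / n : ℝ) * log (Z n x) ≤ (1 / n) * (n * (1 / (m + 1))) := by gcongr
    _ = 1 / (m + 1) := by field_simp
    _ ≤ ζ := hm.le

lemma eventually_le_inv_mul_log {z : ℕ → ℝ} {c ζ : ℝ} (hc : 0 < c)
    (hz : ∀ n : ℕ, 1 ≤ n → c * exp (-(n * ζ)) ≤ z n) {ε : ℝ} (hε : 0 < ε) :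
    ∀ᶠ n : ℕ in atTop, -ζ - ε ≤ (1 / n : ℝ) * log (z n) := by
  have hsmall : ∀ᶠ n : ℕ in atTop, -ε < log c / n :=
    (tendsto_order.1 (tendsto_const_div_atTop_nhds_zero_nat (log c))).1 _ (neg_lt_zero.2 hε)
  filter_upwards [hsmall, eventually_ge_atTop 1] with n hsmall hn
  have hn' : (0 : ℝ) < n := by exact_mod_cast hn
  have hlog : log c - n * ζ ≤ log (z n) := by
    simpa [log_mul hc.ne' (exp_pos _).ne', sub_eq_add_neg] using
      log_le_log (by positivity) (hz n hn)
  calc -ζ - ε ≤ log c / n - ζ := by linarith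
    _ = (1 / n : ℝ) * (log c - n * ζ) := by field_simp
    _ ≤ (1 / n : ℝ) * log (z n) := by gcongr

end Growth

section Prior

lemma measure_inter_ball_pos_of_convex {E : Type*} [NormedAddCommGroup E] [NormedSpace ℝ E]
    [MeasurableSpace E] [BorelSpace E] [FiniteDimensional ℝ E] (μ : Measure E)
    [μ.IsAddHaarMeasure] {s : Set E} (hs : Convex ℝ s) (hsb : Bornology.IsBounded s)
    (hμs : 0 < μ s) {x : E} (hx : x ∈ s) {δ : ℝ} (hδ : 0 < δ) :
    0 < μ (s ∩ Metric.ball x δ) := by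
  -- a homothetic copy of `s`, shrunk towards `x` by the factor `t`, fits into `s ∩ ball x δ`
  set t := δ / (Metric.diam s + δ)
  have hdiam := Metric.diam_nonneg (s := s)
  have ht0 : 0 < t := by positivity
  have ht1 : t ≤ 1 := (div_le_one (by positivity)).2 (by linarith)
  have hsub : AffineMap.homothety x t '' s ⊆ s ∩ Metric.ball x δ := by
    rintro _ ⟨y, hy, rfl⟩
    refine ⟨?_, ?_⟩
    · simpa [AffineMap.homothety_apply, add_comm] using hs.add_smul_sub_mem hx hy ⟨ht0.le, ht1⟩
    · rw [Metric.mem_ball, dist_homothety_center, Real.norm_of_nonneg ht0.le]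
      calc t * dist x y ≤ t * Metric.diam s := by gcongr; exact Metric.dist_le_diam_of_mem hsb hx hy
        _ < δ := by
          rw [div_mul_eq_mul_div, div_lt_iff₀ (by positivity)]
          nlinarith
  refine lt_of_lt_of_le ?_ (measure_mono hsub)
  rw [Measure.addHaar_image_homothety]
  exact ENNReal.mul_pos (by simp [ht0.ne']) hμs.ne'

variable {k : ℕ} {Θ : Set (Fin k → ℝ)} {P₀ : Measure (Fin k → ℝ)}

lemma HypA.volume_pos (hA : HypA Θ P₀) : 0 < volume Θ := by
  obtain ⟨hprob, ρ, -, -, rfl⟩ := hA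
  refine pos_iff_ne_zero.2 fun h => ?_
  have := hprob.measure_univ
  simp [Measure.restrict_eq_zero.2 h] at this

lemma HypA.absolutelyContinuous (hA : HypA Θ P₀) (hΘ : MeasurableSet Θ) :
    volume.restrict Θ ≪ P₀ := by
  obtain ⟨-, ρ, hρc, hρpos, rfl⟩ := hA
  refine withDensity_absolutelyContinuous' (hρc.aemeasurable hΘ).ennreal_ofReal ?_
  filter_upwards [ae_restrict_mem hΘ] with θ hθ
  simpa using hρpos θ hθ

lemma HypA.measure_pball_pos (hA : HypA Θ P₀) (hΘ : MeasurableSet Θ) (hconv : Convex ℝ Θ)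
    (hbdd : Bornology.IsBounded Θ) {θ₀ : Fin k → ℝ} (hθ₀ : θ₀ ∈ Θ) {δ : ℝ} (hδ : 0 < δ) :
    0 < P₀ (pball Θ θ₀ δ) := by
  refine pos_iff_ne_zero.2 fun h => ?_
  have hvol := hA.absolutelyContinuous hΘ h
  rw [Measure.restrict_apply' hΘ] at hvol
  refine (measure_inter_ball_pos_of_convex volume hconv hbdd hA.volume_pos hθ₀ hδ).ne' ?_
  have hsub : Θ ∩ Metric.ball θ₀ δ ⊆ pball Θ θ₀ δ ∩ Θ := fun θ hθ => ⟨⟨hθ.1, hθ.2⟩, hθ.1⟩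
  exact measure_mono_null hsub hvol

lemma measurableSet_box (a b : Fin k → ℝ) : MeasurableSet (box a b) :=
  MeasurableSet.univ_pi fun _ => measurableSet_Icc

lemma convex_box (a b : Fin k → ℝ) : Convex ℝ (box a b) :=
  convex_pi fun _ _ => convex_Icc _ _

lemma isBounded_box (a b : Fin k → ℝ) : Bornology.IsBounded (box a b) :=
  (isCompact_univ_pi fun _ => isCompact_Icc).isBounded

end Prior

lemma IsGibbs.exp_birk_le_and_le {q : ℕ} {Ω : Set (FS q)} {J : FS q → ℝ} {K : ℝ}
    {μ : Measure (FS q)} (h : IsGibbs Ω J K μ) (hK : 0 < K) {x : FS q} (hx : x ∈ Ω) {n : ℕ}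
    (hn : 1 ≤ n) :
    exp (birk (fun z => log (J z)) n x) ≤ K * (μ (cyl x n)).toReal ∧
      (μ (cyl x n)).toReal ≤ K * exp (birk (fun z => log (J z)) n x) := by
  obtain ⟨hlow, hup⟩ := h x hx n hn
  rw [le_div_iff₀ (exp_pos _), inv_mul_le_iff₀ hK] at hlow
  rw [div_le_iff₀ (exp_pos _)] at hup
  exact ⟨hlow, hup⟩

lemma nonpos_of_forall_nat_mul_le {c C : ℝ} (h : ∀ n : ℕ, 1 ≤ n → n * c ≤ C) : c ≤ 0 := by
  by_contra! hc
  obtain ⟨n, hn⟩ := exists_nat_gt (C / c)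
  have := h (n + 1) (by omega)
  rw [div_lt_iff₀ hc] at hn
  push_cast at this
  nlinarith

namespace Setting

variable {q k : ℕ} (S : Setting q k) {P₀ : Measure (Fin k → ℝ)} {θ θ' θ₀ : Fin k → ℝ}

lemma K_pos : 0 < S.K := one_pos.trans S.hK

lemma ae_mem_sftSet (hθ : θ ∈ box S.a S.b) : ∀ᵐ y ∂S.μ θ, y ∈ sftSet S.M := by
  have := S.prob θ hθ
  rw [ae_mem_iff_measure_eq (measurableSet_sftSet S.M).nullMeasurableSet]
  simp [S.supp θ hθ]

lemma log_J_div (hθ : θ ∈ box S.a S.b) (hθ' : θ' ∈ box S.a S.b) :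
    (fun x => log (S.J θ x / S.J θ' x)) = fun x => log (S.J θ x) - log (S.J θ' x) :=
  funext fun x => log_div ((S.norm θ hθ).1 x).ne' ((S.norm θ' hθ').1 x).ne'

lemma continuous_log_J_div (hθ : θ ∈ box S.a S.b) (hθ' : θ' ∈ box S.a S.b) :
    Continuous fun x => log (S.J θ x / S.J θ' x) := by
  rw [S.log_J_div hθ hθ']
  exact (S.lip θ hθ).continuous.sub (S.lip θ' hθ').continuous

lemma exp_birk_log_div_le (hθ : θ ∈ box S.a S.b) (hθ' : θ' ∈ box S.a S.b) {y : FS q}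
    (hy : y ∈ sftSet S.M) {n : ℕ} (hn : 1 ≤ n) :
    exp (birk (fun x => log (S.J θ x / S.J θ' x)) n y) ≤
      S.K ^ 2 * ((S.μ θ (cyl y n)).toReal / (S.μ θ' (cyl y n)).toReal) := by
  obtain ⟨hexp, -⟩ := (S.gibbs θ hθ).exp_birk_le_and_le S.K_pos hy hn
  obtain ⟨hexp', hcyl'⟩ := (S.gibbs θ' hθ').exp_birk_le_and_le S.K_pos hy hn
  have hpos' : 0 < (S.μ θ' (cyl y n)).toReal := pos_of_mul_pos_right
    ((exp_pos _).trans_le hexp') S.K_pos.le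
  rw [S.log_J_div hθ hθ', birk_sub, exp_sub, div_le_iff₀ (exp_pos _)]
  calc exp (birk (fun x => log (S.J θ x)) n y) ≤ S.K * (S.μ θ (cyl y n)).toReal := hexp
    _ = S.K ^ 2 * ((S.μ θ (cyl y n)).toReal / (S.μ θ' (cyl y n)).toReal) *
          ((S.μ θ' (cyl y n)).toReal / S.K) := by
        field_simp [S.K_pos.ne', hpos'.ne']
    _ ≤ _ := by
        gcongr
        rwa [div_le_iff₀' S.K_pos]

lemma birk_log_div_le (hθ : θ ∈ box S.a S.b) (hθ' : θ' ∈ box S.a S.b) {y : FS q}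
    (hy : y ∈ sftSet S.M) {n : ℕ} (hn : 1 ≤ n) :
    birk (fun x => log (S.J θ x / S.J θ' x)) n y ≤
      2 * log S.K - 1 + (S.μ θ (cyl y n)).toReal / (S.μ θ' (cyl y n)).toReal := by
  have hexp := S.exp_birk_log_div_le hθ hθ' hy hn
  have := S.K_pos
  have hratio : 0 < (S.μ θ (cyl y n)).toReal / (S.μ θ' (cyl y n)).toReal :=
    pos_of_mul_pos_right ((exp_pos _).trans_le hexp) (by positivity)
  rw [← le_log_iff_exp_le (by positivity), log_mul (by positivity) hratio.ne', log_pow] at hexp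
  linarith [log_le_sub_one_of_pos hratio]

lemma integrable_cyl_ratio (θ : Fin k → ℝ) (hθ₀ : θ₀ ∈ box S.a S.b) (n : ℕ) :
    Integrable (fun y => (S.μ θ (cyl y n)).toReal / (S.μ θ₀ (cyl y n)).toReal) (S.μ θ₀) := by
  have := S.prob θ₀ hθ₀
  simp only [cyl_eq_preimage_prefixWord]
  exact integrable_comp_of_fintype (measurable_prefixWord n) _
    fun w => (S.μ θ (prefixWord n ⁻¹' {w})).toReal / (S.μ θ₀ (prefixWord n ⁻¹' {w})).toReal

lemma integral_log_J_div_nonpos (hθ₀ : θ₀ ∈ box S.a S.b) (hθ : θ ∈ box S.a S.b) :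
    ∫ x, log (S.J θ x / S.J θ₀ x) ∂(S.μ θ₀) ≤ 0 := by
  have := S.prob θ₀ hθ₀
  have := S.prob θ hθ
  have hshift := (S.erg θ₀ hθ₀).toMeasurePreserving
  have hf : Integrable (fun x => log (S.J θ x / S.J θ₀ x)) (S.μ θ₀) :=
    (S.continuous_log_J_div hθ hθ₀).integrable_of_hasCompactSupport
      (HasCompactSupport.of_compactSpace _)
  refine nonpos_of_forall_nat_mul_le (C := 2 * log S.K) fun n hn => ?_
  have hratio := S.integrable_cyl_ratio θ hθ₀ n
  calc (n : ℝ) * ∫ x, log (S.J θ x / S.J θ₀ x) ∂(S.μ θ₀)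
      = ∫ y, birk (fun x => log (S.J θ x / S.J θ₀ x)) n y ∂(S.μ θ₀) :=
        (integral_birk hshift hf n).symm
    _ ≤ ∫ y, (2 * log S.K - 1 +
          (S.μ θ (cyl y n)).toReal / (S.μ θ₀ (cyl y n)).toReal) ∂(S.μ θ₀) := by
        refine integral_mono_ae (integrable_birk hshift hf n)
          ((integrable_const _).add hratio) ?_
        filter_upwards [S.ae_mem_sftSet hθ₀] with y hy
        exact S.birk_log_div_le hθ hθ₀ hy hn
    _ ≤ 2 * log S.K := by
        rw [integral_add (integrable_const _) hratio]
        have hle := integral_fiber_ratio_le_one (measurable_prefixWord n) (S.μ θ₀) (S.μ θ)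
        simp only [← cyl_eq_preimage_prefixWord] at hle
        simp only [integral_const, probReal_univ, one_smul]
        linarith

/-- The paper's `Z_n(y)`. -/
def partitionFunction (P₀ : Measure (Fin k → ℝ)) (θ₀ : Fin k → ℝ) (n : ℕ) (y : FS q) : ℝ :=
  ∫ θ in box S.a S.b, (S.μ θ (cyl y n)).toReal / (S.μ θ₀ (cyl y n)).toReal ∂P₀

lemma partitionFunction_nonneg (n : ℕ) (y : FS q) : 0 ≤ S.partitionFunction P₀ θ₀ n y :=
  integral_nonneg fun _ => by positivity

lemma integrableOn_cyl_ratio [IsFiniteMeasure P₀] (y : FS q) (n : ℕ) (c : ℝ) :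
    IntegrableOn (fun θ => (S.μ θ (cyl y n)).toReal / c) (box S.a S.b) P₀ :=
  integrable_toReal_measure_div (ae_restrict_of_forall_mem (measurableSet_box _ _) S.prob)
    (S.measμ y n) c

lemma integrable_partitionFunction (hθ₀ : θ₀ ∈ box S.a S.b) (n : ℕ) :
    Integrable (S.partitionFunction P₀ θ₀ n) (S.μ θ₀) := by
  have := S.prob θ₀ hθ₀
  unfold partitionFunction
  simp only [cyl_eq_preimage_prefixWord]
  exact integrable_comp_of_fintype (measurable_prefixWord n) _ fun w =>
    ∫ θ in box S.a S.b, (S.μ θ (prefixWord n ⁻¹' {w})).toReal /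
      (S.μ θ₀ (prefixWord n ⁻¹' {w})).toReal ∂P₀

lemma integral_partitionFunction_le_one [IsProbabilityMeasure P₀] (hθ₀ : θ₀ ∈ box S.a S.b)
    (n : ℕ) : ∫ y, S.partitionFunction P₀ θ₀ n y ∂(S.μ θ₀) ≤ 1 := by
  have := S.prob θ₀ hθ₀
  unfold partitionFunction
  simp only [cyl_eq_preimage_prefixWord]
  refine integral_integral_fiber_ratio_le_one (measurable_prefixWord n) _ ?_
    (ae_restrict_of_forall_mem (measurableSet_box _ _) S.prob) fun y => ?_
  · simpa using prob_le_one
  · simpa only [cyl_eq_preimage_prefixWord] using S.measμ y n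

lemma ae_eventually_inv_mul_log_partitionFunction_le [IsProbabilityMeasure P₀]
    (hθ₀ : θ₀ ∈ box S.a S.b) :
    ∀ᵐ y ∂(S.μ θ₀), ∀ ζ > (0 : ℝ), ∀ᶠ n : ℕ in atTop,
      (1 / n : ℝ) * log (S.partitionFunction P₀ θ₀ n y) ≤ ζ := by
  have := S.prob θ₀ hθ₀
  exact ae_eventually_inv_mul_log_le S.partitionFunction_nonneg
    (S.integrable_partitionFunction hθ₀) (S.integral_partitionFunction_le_one hθ₀)

lemma exists_pos_mul_exp_le_partitionFunction (hA : HypA (box S.a S.b) P₀)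
    (hθ₀ : θ₀ ∈ box S.a S.b) {y : FS q} (hy : y ∈ sftSet S.M) {ζ : ℝ} (hζ : 0 < ζ) :
    ∃ c > 0, ∀ n : ℕ, 1 ≤ n → c * exp (-(n * ζ)) ≤ S.partitionFunction P₀ θ₀ n y := by
  have := hA.1
  have hK := S.K_pos
  obtain ⟨δ, hδ, hclose⟩ := S.contJ θ₀ hθ₀ ζ hζ
  set B := pball (box S.a S.b) θ₀ δ
  have hBbox : B ⊆ box S.a S.b := Set.sep_subset _ _
  have hBmeas : MeasurableSet B := (measurableSet_box _ _).inter Metric.isOpen_ball.measurableSet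
  have hB : 0 < P₀.real B := ENNReal.toReal_pos (hA.measure_pball_pos (measurableSet_box _ _)
    (convex_box _ _) (isBounded_box _ _) hθ₀ hδ).ne' (measure_ne_top _ _)
  refine ⟨(S.K ^ 2)⁻¹ * P₀.real B, by positivity, fun n hn => ?_⟩
  have hratio : ∀ θ ∈ B, (S.K ^ 2)⁻¹ * exp (-(n * ζ)) ≤
      (S.μ θ (cyl y n)).toReal / (S.μ θ₀ (cyl y n)).toReal := by
    rintro θ ⟨hθ, hdist⟩
    have hlog : ∀ x, -ζ ≤ log (S.J θ x / S.J θ₀ x) := fun x => by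
      rw [congrFun (S.log_J_div hθ hθ₀) x]
      have hdLip := abs_sub_le_dLip (S.lip θ hθ).continuous (S.lip θ₀ hθ₀).continuous x
      linarith [abs_le.1 (hdLip.trans (hclose θ hθ hdist).le)]
    rw [inv_mul_le_iff₀ (by positivity)]
    refine le_trans ?_ (S.exp_birk_log_div_le hθ hθ₀ hy hn)
    simpa using mul_le_birk hlog n y
  calc (S.K ^ 2)⁻¹ * P₀.real B * exp (-(n * ζ))
      = ∫ _ in B, (S.K ^ 2)⁻¹ * exp (-(n * ζ)) ∂P₀ := by
        rw [setIntegral_const, smul_eq_mul]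
        ring
    _ ≤ ∫ θ in B, (S.μ θ (cyl y n)).toReal / (S.μ θ₀ (cyl y n)).toReal ∂P₀ :=
        setIntegral_mono_on (integrableOn_const (measure_ne_top _ _))
          ((S.integrableOn_cyl_ratio y n _).mono_set hBbox) hBmeas hratio
    _ ≤ S.partitionFunction P₀ θ₀ n y :=
        setIntegral_mono_set (S.integrableOn_cyl_ratio y n _)
          (ae_of_all _ fun _ => by positivity) hBbox.eventuallyLE

lemma eventually_neg_le_inv_mul_log_partitionFunction (hA : HypA (box S.a S.b) P₀)
    (hθ₀ : θ₀ ∈ box S.a S.b) {y : FS q} (hy : y ∈ sftSet S.M) {ζ : ℝ} (hζ : 0 < ζ) :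
    ∀ᶠ n : ℕ in atTop, -ζ ≤ (1 / n : ℝ) * log (S.partitionFunction P₀ θ₀ n y) := by
  obtain ⟨c, hc, hZ⟩ := S.exists_pos_mul_exp_le_partitionFunction hA hθ₀ hy (half_pos hζ)
  filter_upwards [eventually_le_inv_mul_log hc hZ (half_pos hζ)] with n hn
  linarith

end Setting

/-- For `μ_{θ₀}`-a.e. `y`, with
`Z_n(y) = ∫_Θ μ_θ(C_n(y))/μ_{θ₀}(C_n(y)) dΠ₀(θ)`, one has
`∫_Θ ∫ log(J_θ/J_{θ₀}) dμ_{θ₀} dΠ₀ ≤ limsup (1/n) log Z_n(y) ≤ 0`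
(the limsup bounds being stated through frequently/eventually estimates). -/
theorem partition_function_bounds {q k : ℕ} (S : Setting q k)
    (P₀ : Measure (Fin k → ℝ)) (hA : HypA (box S.a S.b) P₀)
    (θ₀ : Fin k → ℝ) (hθ₀ : θ₀ ∈ box S.a S.b) :
    ∀ᵐ y ∂(S.μ θ₀), ∀ ζ > (0 : ℝ),
      (∃ᶠ n : ℕ in Filter.atTop,
        (∫ θ in box S.a S.b,
            (∫ x, Real.log (S.J θ x / S.J θ₀ x) ∂(S.μ θ₀)) ∂P₀) - ζ
          ≤ (1 / n : ℝ) * Real.log (∫ θ in box S.a S.b,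
              ((S.μ θ) (cyl y n)).toReal / ((S.μ θ₀) (cyl y n)).toReal ∂P₀)) ∧
      (∀ᶠ n : ℕ in Filter.atTop,
        (1 / n : ℝ) * Real.log (∫ θ in box S.a S.b,
            ((S.μ θ) (cyl y n)).toReal / ((S.μ θ₀) (cyl y n)).toReal ∂P₀)
          ≤ ζ) := by
  have := hA.1
  have hentropy : ∫ θ in box S.a S.b, (∫ x, Real.log (S.J θ x / S.J θ₀ x) ∂(S.μ θ₀)) ∂P₀ ≤ 0 :=
    setIntegral_nonpos (measurableSet_box _ _) fun θ hθ => S.integral_log_J_div_nonpos hθ₀ hθ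
  filter_upwards [S.ae_mem_sftSet hθ₀,
    S.ae_eventually_inv_mul_log_partitionFunction_le (P₀ := P₀) hθ₀] with y hy hupper ζ hζ
  refine ⟨Eventually.frequently ?_, hupper ζ hζ⟩
  filter_upwards [S.eventually_neg_le_inv_mul_log_partitionFunction hA hθ₀ hy hζ] with n hn
  exact le_trans (by linarith) hn

end PaperBGI
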